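/- The zeta transform identity used for the speedup: with f(S) = T^X_{i-1}(S, J₁,...,J_{ℓ-2}) defined on subsets S of X \ ⋃_{j=1}^{ℓ-2} J_j, for every J_{ℓ-1} ⊆ X disjoint from J₁,...,J_{ℓ-2} one has T^X_i(J₁,...,J_{ℓ-1}) = [ (J₁,...,J_{ℓ-1}) is proper ] · (ζf)(X ∩ proper(J₁,...,J_{ℓ-1})), where (ζf)(Q) = Σ_{R ⊆ Q} f(R). -/

import Mathlib

open Classical in
/-- Tuples in `U`: proper and with any `ℓ` consecutive entries pairwise disjoint. -/
noncomputable def TTable {V : Type*} [Fintype V] [DecidableEq V]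
    (w : V → V → ℕ) (ℓ s : ℕ) (X : Finset V) (i : ℕ)
    (J : Fin (ℓ - 1) → Finset V) : ℕ :=
  Nat.card {I : Fin s → Finset V //
    (∀ a b : Fin s, ∀ x ∈ I a, ∀ y ∈ I b, x ≠ y →
       w x y ≤ (((a : ℕ) : ℤ) - ((b : ℕ) : ℤ)).natAbs) ∧
    (∀ a b : Fin s, a ≠ b → (((a : ℕ) : ℤ) - ((b : ℕ) : ℤ)).natAbs < ℓ →
       Disjoint (I a) (I b)) ∧
    (∀ k : Fin s, (k : ℕ) < i - (ℓ - 1) → I k ⊆ X) ∧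
    (∀ r : Fin (ℓ - 1), ∀ h : i - (ℓ - 1) + (r : ℕ) < s,
       I ⟨i - (ℓ - 1) + (r : ℕ), h⟩ = J r) ∧
    (∀ k : Fin s, i ≤ (k : ℕ) → I k = ∅)}

/-- The window `(J₁,…,J_{ℓ-1})` is proper. -/
def ProperWindow {V : Type*} (w : V → V → ℕ) (ℓ : ℕ)
    (J : Fin (ℓ - 1) → Finset V) : Prop :=
  ∀ a b : Fin (ℓ - 1), ∀ x ∈ J a, ∀ y ∈ J b, x ≠ y →
    w x y ≤ (((a : ℕ) : ℤ) - ((b : ℕ) : ℤ)).natAbs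

open Classical in
/-- `proper(J₁,…,J_{ℓ-1})`: vertices outside ⋃ J_j compatible with the window. -/
noncomputable def ProperSet {V : Type*} [Fintype V] [DecidableEq V]
    (w : V → V → ℕ) (ℓ : ℕ) (J : Fin (ℓ - 1) → Finset V) : Finset V :=
  Finset.univ.filter (fun v =>
    (∀ j : Fin (ℓ - 1), v ∉ J j) ∧
    ∀ j : Fin (ℓ - 1), ∀ x ∈ J j, w v x ≤ (j : ℕ) + 1)

/-- Prepend `J₀` to the window, dropping its last entry. -/
def ShiftWindow {V : Type*} (ℓ : ℕ) (J0 : Finset V)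
    (J : Fin (ℓ - 1) → Finset V) : Fin (ℓ - 1) → Finset V :=
  fun r => if (r : ℕ) = 0 then J0
    else J ⟨(r : ℕ) - 1, Nat.lt_of_le_of_lt (Nat.sub_le _ _) r.isLt⟩

/-- The zeta transform: (ζf)(Q) = Σ_{R ⊆ Q} f(R). -/
def zeta {V : Type*} [DecidableEq V] (f : Finset V → ℤ) (Q : Finset V) : ℤ :=
  ∑ R ∈ Q.powerset, f R

/-!
Erase the last window entry of a tuple. An `i`-tuple with window `(J₁,…,J_{ℓ-1})` whose entry
just before the window is `S` becomes an `(i-1)`-tuple with window `(S, J₁,…,J_{ℓ-2})`.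
Conversely `J_{ℓ-1}` can be put back into any such `(i-1)`-tuple as soon as the window is
proper and `S ⊆ X ∩ proper(J)`: the entries left of `S` are at least `ℓ` slots away from
`J_{ℓ-1}`, so `w ≤ ℓ` puts no constraint on them. Summing over `S` is the zeta transform, and
a tuple with an improper window does not exist.
-/

open Finset Function

section Slots

variable {V : Type*} (w : V → V → ℕ) (ℓ : ℕ)

/-- The constraints a tuple of `U` puts on two of its entries lying `d` slots apart. -/
def SlotsCompatible (d : ℕ) (A B : Finset V) : Prop :=
  (∀ x ∈ A, ∀ y ∈ B, x ≠ y → w x y ≤ d) ∧ (d ≠ 0 → d < ℓ → Disjoint A B)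

def Admissible {s : ℕ} (I : Fin s → Finset V) : Prop :=
  ∀ a b : Fin s, SlotsCompatible w ℓ (((a : ℕ) : ℤ) - (b : ℕ)).natAbs (I a) (I b)

variable {w ℓ}

lemma SlotsCompatible.symm (hsymm : ∀ x y, w x y = w y x) {d : ℕ} {A B : Finset V}
    (h : SlotsCompatible w ℓ d A B) : SlotsCompatible w ℓ d B A :=
  ⟨fun x hx y hy hxy => hsymm x y ▸ h.1 y hy x hx hxy.symm, fun h0 hd => (h.2 h0 hd).symm⟩

lemma SlotsCompatible.empty_left (d : ℕ) (B : Finset V) : SlotsCompatible w ℓ d ∅ B :=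
  ⟨by simp, fun _ _ => disjoint_empty_left B⟩

lemma SlotsCompatible.empty_right (d : ℕ) (A : Finset V) : SlotsCompatible w ℓ d A ∅ :=
  ⟨by simp, fun _ _ => disjoint_empty_right A⟩

lemma SlotsCompatible.of_le (hbound : ∀ x y, w x y ≤ ℓ) {d : ℕ} (hd : ℓ ≤ d) (A B : Finset V) :
    SlotsCompatible w ℓ d A B :=
  ⟨fun x _ y _ _ => (hbound x y).trans hd, fun _ h => absurd h (not_lt.2 hd)⟩

lemma Admissible.update [DecidableEq V] (hsymm : ∀ x y, w x y = w y x) {s : ℕ}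
    {I : Fin s → Finset V} (hI : Admissible w ℓ I) {p : Fin s} {A : Finset V}
    (hAA : SlotsCompatible w ℓ 0 A A)
    (hA : ∀ b, b ≠ p → SlotsCompatible w ℓ (((p : ℕ) : ℤ) - (b : ℕ)).natAbs A (I b)) :
    Admissible w ℓ (update I p A) := by
  intro a b
  by_cases ha : a = p <;> by_cases hb : b = p
  · subst ha hb; simpa using hAA
  · subst ha; simpa [hb] using hA b hb
  · subst hb
    have h := (hA a ha).symm hsymm
    rw [← Int.natAbs_neg, neg_sub] at h
    simpa [ha] using h
  · simpa [ha, hb] using hI a b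

end Slots

section Tuples

variable {V : Type*} {w : V → V → ℕ} {ℓ : ℕ}

variable (ℓ) in
def windowEntry (J : Fin (ℓ - 1) → Finset V) (r : ℕ) : Finset V :=
  if h : r < ℓ - 1 then J ⟨r, h⟩ else ∅

lemma windowEntry_eq_empty {r : ℕ} (hr : ℓ - 1 ≤ r) (J : Fin (ℓ - 1) → Finset V) :
    windowEntry ℓ J r = ∅ :=
  dif_neg (by omega)

lemma windowEntry_shiftWindow_zero (hℓ : 2 ≤ ℓ) (S : Finset V) (J : Fin (ℓ - 1) → Finset V) :
    windowEntry ℓ (ShiftWindow ℓ S J) 0 = S := by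
  simp [windowEntry, ShiftWindow, show 0 < ℓ - 1 by omega]

lemma windowEntry_shiftWindow_succ {r : ℕ} (hr : r ≠ ℓ - 2) (S : Finset V)
    (J : Fin (ℓ - 1) → Finset V) :
    windowEntry ℓ (ShiftWindow ℓ S J) (r + 1) = windowEntry ℓ J r := by
  unfold windowEntry ShiftWindow
  by_cases h : r + 1 < ℓ - 1
  · rw [dif_pos h, dif_pos (by omega)]
    simp
  · rw [dif_neg h, dif_neg (by omega)]

lemma ProperWindow.slotsCompatible_windowEntry {J : Fin (ℓ - 1) → Finset V}
    (hP : ProperWindow w ℓ J) (hJdisj : ∀ a b, a ≠ b → Disjoint (J a) (J b))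
    (a : Fin (ℓ - 1)) (r : ℕ) :
    SlotsCompatible w ℓ (((a : ℕ) : ℤ) - r).natAbs (J a) (windowEntry ℓ J r) := by
  unfold windowEntry
  split_ifs with hr
  · exact ⟨hP a ⟨r, hr⟩, fun h0 _ => hJdisj _ _ fun e => h0 (by subst e; simp)⟩
  · exact .empty_right _ _

variable (w ℓ) in
/-- Membership in `TTable`, with the window and the empty tail merged into one condition. -/
def IsTuple (X : Finset V) (i : ℕ) (J : Fin (ℓ - 1) → Finset V) {s : ℕ}
    (I : Fin s → Finset V) : Prop :=
  Admissible w ℓ I ∧ ∀ k : Fin s, ((k : ℕ) < i - (ℓ - 1) → I k ⊆ X) ∧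
    (i - (ℓ - 1) ≤ k → I k = windowEntry ℓ J (k - (i - (ℓ - 1))))

lemma ttable_eq_card [Fintype V] [DecidableEq V] {s i : ℕ} (hi : ℓ - 1 ≤ i) (X : Finset V)
    (J : Fin (ℓ - 1) → Finset V) :
    TTable w ℓ s X i J = Nat.card {I : Fin s → Finset V // IsTuple w ℓ X i J I} := by
  refine Nat.card_congr (Equiv.subtypeEquivRight fun I => ⟨?_, ?_⟩)
  · rintro ⟨hw, hd, hX, hJ, hE⟩
    refine ⟨fun a b => ⟨hw a b, fun h0 => hd a b fun e => h0 (by simp [e])⟩,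
      fun k => ⟨hX k, fun hk => ?_⟩⟩
    by_cases hr : (k : ℕ) - (i - (ℓ - 1)) < ℓ - 1
    · rw [windowEntry, dif_pos hr, ← hJ _ (by simp only; have := k.isLt; omega)]
      congr 1
      ext
      simp only
      omega
    · rw [windowEntry_eq_empty (by omega)]
      exact hE k (by omega)
  · rintro ⟨hadm, hslot⟩
    refine ⟨fun a b => (hadm a b).1, fun a b hab => (hadm a b).2 fun h => hab (Fin.ext (by omega)),
      fun k => (hslot k).1, fun r hr => ?_, fun k hk => ?_⟩
    · rw [(hslot _).2 (by simp)]
      simp [windowEntry]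
    · rw [(hslot k).2 (by omega), windowEntry_eq_empty (by omega)]

variable {s i : ℕ} {X : Finset V} {J : Fin (ℓ - 1) → Finset V} {I : Fin s → Finset V}

lemma IsTuple.apply_window (hI : IsTuple w ℓ X i J I) (hi : ℓ - 1 ≤ i) (his : i ≤ s)
    (r : Fin (ℓ - 1)) : I ⟨i - (ℓ - 1) + r, by have := r.isLt; omega⟩ = J r := by
  rw [(hI.2 _).2 (by simp)]
  simp [windowEntry]

lemma IsTuple.apply_first_of_shiftWindow (hℓ : 2 ≤ ℓ) (hi : ℓ ≤ i) (his : i ≤ s) {S : Finset V}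
    (hI : IsTuple w ℓ X (i - 1) (ShiftWindow ℓ S J) I) :
    I ⟨i - ℓ, by omega⟩ = S := by
  rw [(hI.2 _).2 (by simp only; omega), show i - ℓ - (i - 1 - (ℓ - 1)) = 0 by omega,
    windowEntry_shiftWindow_zero hℓ]

lemma IsTuple.properWindow (hI : IsTuple w ℓ X i J I) (hi : ℓ - 1 ≤ i) (his : i ≤ s) :
    ProperWindow w ℓ J := by
  intro a b x hx y hy hxy
  have h := (hI.1 _ _).1 x (by rwa [hI.apply_window hi his a]) y
    (by rwa [hI.apply_window hi his b]) hxy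
  simp only at h
  omega

lemma subset_properSet_iff [Fintype V] [DecidableEq V] {S : Finset V} :
    S ⊆ ProperSet w ℓ J ↔ ∀ j : Fin (ℓ - 1), SlotsCompatible w ℓ (j + 1) S (J j) := by
  simp only [subset_iff, ProperSet, mem_filter, mem_univ, true_and]
  constructor
  · intro h j
    exact ⟨fun x hx y hy _ => (h hx).2 j y hy,
      fun _ _ => disjoint_left.2 fun v hv => (h hv).1 j⟩
  · intro h v hv
    have hnot : ∀ j, v ∉ J j := fun j =>
      disjoint_left.1 ((h j).2 (by omega) (by have := j.isLt; omega)) hv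
    exact ⟨hnot, fun j x hx => (h j).1 v hv x hx (by rintro rfl; exact hnot j hx)⟩

lemma IsTuple.subset_properSet [Fintype V] [DecidableEq V] (hI : IsTuple w ℓ X i J I)
    (hℓ : 0 < ℓ) (hi : ℓ ≤ i) (his : i ≤ s) : I ⟨i - ℓ, by omega⟩ ⊆ X ∩ ProperSet w ℓ J := by
  refine subset_inter ((hI.2 _).1 (by simp only; omega)) (subset_properSet_iff.2 fun j => ?_)
  have h := hI.1 ⟨i - ℓ, by omega⟩ ⟨i - (ℓ - 1) + j, by have := j.isLt; omega⟩
  rw [hI.apply_window (by omega) his j] at h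
  convert h using 1
  simp only
  omega

lemma IsTuple.slotsCompatible_last_window (hsymm : ∀ x y, w x y = w y x)
    (hbound : ∀ x y, w x y ≤ ℓ) (hℓ : 2 ≤ ℓ) (hi : ℓ ≤ i) (hP : ProperWindow w ℓ J)
    (hJdisj : ∀ a b, a ≠ b → Disjoint (J a) (J b)) {S : Finset V}
    (hSJ : ∀ j : Fin (ℓ - 1), SlotsCompatible w ℓ (j + 1) S (J j))
    (hI : IsTuple w ℓ X (i - 1) (ShiftWindow ℓ S J) I) (b : Fin s)
    (hb : (b : ℕ) ≠ i - 1) :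
    SlotsCompatible w ℓ (((i - 1 : ℕ) : ℤ) - (b : ℕ)).natAbs (J ⟨ℓ - 2, by omega⟩) (I b) := by
  by_cases hbq : (b : ℕ) < i - ℓ
  · exact .of_le hbound (by omega) _ _
  obtain ⟨r, hr⟩ : ∃ r, (b : ℕ) = i - ℓ + r := ⟨b - (i - ℓ), by omega⟩
  rw [(hI.2 b).2 (by omega)]
  rcases r with _ | r
  · rw [show (b : ℕ) - (i - 1 - (ℓ - 1)) = 0 by omega, windowEntry_shiftWindow_zero hℓ]
    convert (hSJ ⟨ℓ - 2, by omega⟩).symm hsymm using 1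
    simp only
    omega
  · have hrl : r ≠ ℓ - 2 := fun h => hb (by omega)
    rw [show (b : ℕ) - (i - 1 - (ℓ - 1)) = r + 1 by omega, windowEntry_shiftWindow_succ hrl]
    convert hP.slotsCompatible_windowEntry hJdisj ⟨ℓ - 2, by omega⟩ r using 1
    simp only
    omega

end Tuples

section Recurrence

variable {V : Type*} [DecidableEq V] {w : V → V → ℕ} {ℓ s i : ℕ} {X : Finset V}
  {J : Fin (ℓ - 1) → Finset V}

lemma IsTuple.update_last_empty (hsymm : ∀ x y, w x y = w y x) (hℓ : 2 ≤ ℓ) (hi : ℓ ≤ i)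
    (his : i ≤ s) {I : Fin s → Finset V} (hI : IsTuple w ℓ X i J I) :
    IsTuple w ℓ X (i - 1) (ShiftWindow ℓ (I ⟨i - ℓ, by omega⟩) J)
      (update I ⟨i - 1, by omega⟩ ∅) := by
  refine ⟨hI.1.update hsymm (.empty_left _ _) fun b _ => .empty_left _ _,
    fun k => ⟨fun hk => ?_, fun hk => ?_⟩⟩
  · rw [update_of_ne (Fin.ne_of_val_ne (by simp only; omega))]
    exact (hI.2 k).1 (by omega)
  obtain ⟨r, hr⟩ : ∃ r, (k : ℕ) = i - ℓ + r := ⟨k - (i - ℓ), by omega⟩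
  rcases r with _ | r
  · rw [update_of_ne (Fin.ne_of_val_ne (by simp only; omega)),
      show (k : ℕ) - (i - 1 - (ℓ - 1)) = 0 by omega, windowEntry_shiftWindow_zero hℓ]
    exact congrArg I (Fin.ext hr)
  by_cases hrl : r = ℓ - 2
  · rw [show k = ⟨i - 1, by omega⟩ from Fin.ext (by simp only; omega), update_self,
      windowEntry_eq_empty (by simp only; omega)]
  · rw [update_of_ne (Fin.ne_of_val_ne (by simp only; omega)), (hI.2 k).2 (by omega),
      show (k : ℕ) - (i - 1 - (ℓ - 1)) = r + 1 by omega, windowEntry_shiftWindow_succ hrl,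
      show (k : ℕ) - (i - (ℓ - 1)) = r by omega]

lemma IsTuple.update_last_window [Fintype V] (hsymm : ∀ x y, w x y = w y x)
    (hbound : ∀ x y, w x y ≤ ℓ) (hℓ : 2 ≤ ℓ) (hi : ℓ ≤ i) (his : i ≤ s)
    (hP : ProperWindow w ℓ J) (hJdisj : ∀ a b, a ≠ b → Disjoint (J a) (J b)) {S : Finset V}
    (hS : S ⊆ X ∩ ProperSet w ℓ J) {I : Fin s → Finset V}
    (hI : IsTuple w ℓ X (i - 1) (ShiftWindow ℓ S J) I) :
    IsTuple w ℓ X i J (update I ⟨i - 1, by omega⟩ (J ⟨ℓ - 2, by omega⟩)) := by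
  have hSJ := subset_properSet_iff.1 (hS.trans inter_subset_right)
  refine ⟨hI.1.update hsymm ?_ fun b hb => ?_, fun k => ⟨fun hk => ?_, fun hk => ?_⟩⟩
  · convert hP.slotsCompatible_windowEntry hJdisj ⟨ℓ - 2, by omega⟩ (ℓ - 2) using 1
    · simp
    · simp [windowEntry, show ℓ - 2 < ℓ - 1 by omega]
  · exact hI.slotsCompatible_last_window hsymm hbound hℓ hi hP hJdisj hSJ b
      (Fin.val_ne_of_ne hb)
  · rw [update_of_ne (Fin.ne_of_val_ne (by simp only; omega))]
    by_cases hkq : (k : ℕ) < i - ℓ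
    · exact (hI.2 k).1 (by omega)
    · rw [show k = ⟨i - ℓ, by omega⟩ from Fin.ext (by simp only; omega),
        hI.apply_first_of_shiftWindow hℓ hi his]
      exact hS.trans inter_subset_left
  by_cases hkp : (k : ℕ) = i - 1
  · rw [show k = ⟨i - 1, by omega⟩ from Fin.ext hkp, update_self]
    simp [windowEntry, show i - 1 - (i - (ℓ - 1)) = ℓ - 2 by omega, show ℓ - 2 < ℓ - 1 by omega]
  · rw [update_of_ne (Fin.ne_of_val_ne hkp), (hI.2 k).2 (by omega),
      show (k : ℕ) - (i - 1 - (ℓ - 1)) = (k - (i - (ℓ - 1))) + 1 by omega,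
      windowEntry_shiftWindow_succ (by omega)]

variable [Fintype V]

def tupleFiberEquiv (hsymm : ∀ x y, w x y = w y x) (hbound : ∀ x y, w x y ≤ ℓ) (hℓ : 2 ≤ ℓ)
    (hi : ℓ ≤ i) (his : i ≤ s) (hP : ProperWindow w ℓ J)
    (hJdisj : ∀ a b, a ≠ b → Disjoint (J a) (J b)) {S : Finset V}
    (hS : S ⊆ X ∩ ProperSet w ℓ J) :
    {I : Fin s → Finset V // IsTuple w ℓ X i J I ∧ I ⟨i - ℓ, by omega⟩ = S} ≃
      {I : Fin s → Finset V // IsTuple w ℓ X (i - 1) (ShiftWindow ℓ S J) I} where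
  toFun I := ⟨_, I.2.2 ▸ I.2.1.update_last_empty hsymm hℓ hi his⟩
  invFun I := ⟨_, I.2.update_last_window hsymm hbound hℓ hi his hP hJdisj hS, by
    rw [update_of_ne (Fin.ne_of_val_ne (by simp only; omega)),
      I.2.apply_first_of_shiftWindow hℓ hi his]⟩
  left_inv I := by
    ext1
    have hlast := (I.2.1.2 ⟨i - 1, by omega⟩).2 (by simp only; omega)
    simp only [windowEntry, show i - 1 - (i - (ℓ - 1)) = ℓ - 2 by omega,
      show ℓ - 2 < ℓ - 1 by omega, dif_pos] at hlast
    simp only [update_idem, ← hlast, update_eq_self]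
  right_inv I := by
    ext1
    have hlast := (I.2.2 ⟨i - 1, by omega⟩).2 (by simp only; omega)
    rw [windowEntry_eq_empty (by simp only; omega)] at hlast
    simp only [update_idem, ← hlast, update_eq_self]

lemma card_isTuple_eq_sum (hsymm : ∀ x y, w x y = w y x) (hbound : ∀ x y, w x y ≤ ℓ)
    (hℓ : 2 ≤ ℓ) (hi : ℓ ≤ i) (his : i ≤ s) (hP : ProperWindow w ℓ J)
    (hJdisj : ∀ a b, a ≠ b → Disjoint (J a) (J b)) :
    Nat.card {I : Fin s → Finset V // IsTuple w ℓ X i J I} =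
      ∑ S ∈ (X ∩ ProperSet w ℓ J).powerset,
        Nat.card {I : Fin s → Finset V // IsTuple w ℓ X (i - 1) (ShiftWindow ℓ S J) I} := by
  classical
  rw [Nat.card_eq_fintype_card, Fintype.card_subtype,
    card_eq_sum_card_fiberwise (f := fun I => I ⟨i - ℓ, by omega⟩) fun I hI =>
      mem_powerset.2 ((mem_filter.1 hI).2.subset_properSet (by omega) hi his)]
  refine sum_congr rfl fun S hS => ?_
  rw [← Nat.card_congr (tupleFiberEquiv hsymm hbound hℓ hi his hP hJdisj (mem_powerset.1 hS)),
    Nat.card_eq_fintype_card, Fintype.card_subtype, filter_filter]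

end Recurrence

open Classical in
theorem stmt_12_general {V : Type*} [Fintype V] [DecidableEq V] (w : V → V → ℕ) (ℓ s i : ℕ)
    (hl : 2 ≤ ℓ) (hsymm : ∀ x y, w x y = w y x) (hbound : ∀ x y, w x y ≤ ℓ)
    (hi : ℓ ≤ i) (his : i ≤ s)
    (X : Finset V) (J : Fin (ℓ - 1) → Finset V)
    (hJdisj : ∀ a b, a ≠ b → Disjoint (J a) (J b)) :
    (∀ v ∈ X ∩ ProperSet w ℓ J, ∀ j : Fin (ℓ - 1), (j : ℕ) < ℓ - 2 → v ∉ J j) ∧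
    (TTable w ℓ s X i J : ℤ) =
      (if ProperWindow w ℓ J then 1 else 0) *
        zeta (fun S => (TTable w ℓ s X (i - 1) (ShiftWindow ℓ S J) : ℤ))
          (X ∩ ProperSet w ℓ J) := by
  refine ⟨fun v hv j _ => by simp_all [ProperSet], ?_⟩
  rw [ttable_eq_card (by omega), zeta]
  split_ifs with hP
  · rw [one_mul, card_isTuple_eq_sum hsymm hbound hl hi his hP hJdisj]
    push_cast
    exact sum_congr rfl fun S _ => by rw [ttable_eq_card (by omega)]
  · rw [zero_mul, Nat.cast_eq_zero, Nat.card_eq_zero]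
    exact .inl ⟨fun I => hP (I.2.properWindow (by omega) his)⟩

open Classical in
theorem stmt_12 {V : Type*} [Fintype V] [DecidableEq V] (w : V → V → ℕ) (ℓ s i : ℕ)
    (hl : 2 ≤ ℓ) (hsymm : ∀ x y, w x y = w y x) (hbound : ∀ x y, w x y ≤ ℓ)
    (hdiag : ∀ v, w v v = 0) (hi : ℓ ≤ i) (his : i ≤ s)
    (X : Finset V) (J : Fin (ℓ - 1) → Finset V)
    (hJX : ∀ r, J r ⊆ X) (hJdisj : ∀ a b, a ≠ b → Disjoint (J a) (J b)) :
    (∀ v ∈ X ∩ ProperSet w ℓ J, ∀ j : Fin (ℓ - 1), (j : ℕ) < ℓ - 2 → v ∉ J j) ∧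
    (TTable w ℓ s X i J : ℤ) =
      (if ProperWindow w ℓ J then 1 else 0) *
        zeta (fun S => (TTable w ℓ s X (i - 1) (ShiftWindow ℓ S J) : ℤ))
          (X ∩ ProperSet w ℓ J) :=
  stmt_12_general w ℓ s i hl hsymm hbound hi his X J hJdisj
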